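/- Let D be a positive, 1-periodic, C² function, r a continuous 1-periodic function, and q, λ ∈ ℝ. If (k, ψ) is a principal eigenpair of L_q^λ[r;D] and (k', ψ̃) is a principal eigenpair of L_q^{−λ}[r;D], then k = k'. Consequently, given principal eigenpairs for all λ ∈ ℝ, the spreading speed to the right equals the spreading speed to the left: inf_{λ>0} k_q^λ[r;D]/λ = inf_{λ>0} k_q^{−λ}[r;D]/λ. -/

import Mathlib

/-! Multiplying the eigen-equation for `ψ` by `D^q ψ̃` and the one for `ψ̃` by `D^q ψ` and
subtracting, everything except a total derivative cancels: `L_q^{-λ}` is the formal adjoint of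
`L_q^λ` for the weight `D^q`. Precisely,
`(D^{1+q} (ψ' ψ̃ - ψ ψ̃' - 2λ ψ ψ̃))' = (k - k') ψ ψ̃ D^q`.
The flux on the left is 1-periodic, so the integral of the right-hand side over a period
vanishes; since `ψ ψ̃ D^q > 0`, this forces `k = k'`. -/

open Real MeasureTheory Set Filter Topology

noncomputable section

/-- The operator `L_q^λ[r;D]` acting on C² functions `ψ`:
`(L_q^λ[r;D]ψ)(x) = D ψ'' + ((1+q)D' − 2λD) ψ' + (qD'' + λ²D − (1+q)λD' + r) ψ`. -/
def Lop (q lam : ℝ) (r D ψ : ℝ → ℝ) (x : ℝ) : ℝ :=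
  D x * deriv (deriv ψ) x + ((1 + q) * deriv D x - 2 * lam * D x) * deriv ψ x +
    (q * deriv (deriv D) x + lam ^ 2 * D x - (1 + q) * lam * deriv D x + r x) * ψ x

/-- `(k, ψ)` is a principal eigenpair of `L_q^λ[r;D]`: `ψ` is a positive, 1-periodic,
C² function with `L_q^λ[r;D]ψ = kψ`. -/
def IsEigenpair (q lam : ℝ) (r D : ℝ → ℝ) (k : ℝ) (ψ : ℝ → ℝ) : Prop :=
  ContDiff ℝ 2 ψ ∧ (∀ x, 0 < ψ x) ∧ Function.Periodic ψ 1 ∧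
    ∀ x, Lop q lam r D ψ x = k * ψ x

/-- The Freidlin–Gärtner infimum `inf_{λ>0} k(λ)/λ`, as an extended real number. -/
def speed (k : ℝ → ℝ) : EReal := ⨅ l : {l : ℝ // 0 < l}, ((k l.1 / l.1 : ℝ) : EReal)

theorem Function.Periodic.deriv {f : ℝ → ℝ} {T : ℝ} (hf : Function.Periodic f T) :
    Function.Periodic (deriv f) T := fun x => by
  rw [← deriv_comp_add_const, funext hf]

theorem Function.Periodic.intervalIntegral_deriv_eq_zero {F g : ℝ → ℝ} {T : ℝ}
    (hF : Function.Periodic F T) (hFg : ∀ x, HasDerivAt F (g x) x) (hg : Continuous g) :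
    ∫ x in (0 : ℝ)..T, g x = 0 := by
  rw [intervalIntegral.integral_eq_sub_of_hasDerivAt (fun x _ => hFg x)
    (hg.intervalIntegrable 0 T), ← zero_add T, hF, sub_self]

def lagrangeFlux (q lam : ℝ) (D ψ ψt : ℝ → ℝ) (x : ℝ) : ℝ :=
  D x ^ (1 + q) * (deriv ψ x * ψt x - ψ x * deriv ψt x - 2 * lam * (ψ x * ψt x))

theorem hasDerivAt_lagrangeFlux {q lam : ℝ} {r D ψ ψt : ℝ → ℝ} {x : ℝ}
    (hD : DifferentiableAt ℝ D x) (hDpos : 0 < D x)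
    (hψ : DifferentiableAt ℝ ψ x) (hψ' : DifferentiableAt ℝ (deriv ψ) x)
    (hψt : DifferentiableAt ℝ ψt x) (hψt' : DifferentiableAt ℝ (deriv ψt) x) :
    HasDerivAt (lagrangeFlux q lam D ψ ψt)
      (D x ^ q * (ψt x * Lop q lam r D ψ x - ψ x * Lop q (-lam) r D ψt x)) x := by
  have hpow : HasDerivAt (fun y => D y ^ (1 + q)) (deriv D x * (1 + q) * D x ^ q) x := by
    simpa using hD.hasDerivAt.rpow_const (p := 1 + q) (Or.inl hDpos.ne')
  have hbracket := ((hψ'.hasDerivAt.mul hψt.hasDerivAt).sub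
    (hψ.hasDerivAt.mul hψt'.hasDerivAt)).sub
    ((hψ.hasDerivAt.mul hψt.hasDerivAt).const_mul (2 * lam))
  refine (hpow.mul hbracket).congr_deriv ?_
  simp only [Pi.sub_apply, Pi.mul_apply, rpow_add hDpos, rpow_one, Lop]
  ring

theorem IsEigenpair.differentiable {q lam k : ℝ} {r D ψ : ℝ → ℝ}
    (h : IsEigenpair q lam r D k ψ) : Differentiable ℝ ψ ∧ Differentiable ℝ (deriv ψ) :=
  ⟨h.1.differentiable two_ne_zero, (h.1.deriv' (n := 1)).differentiable one_ne_zero⟩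

theorem IsEigenpair.eigenvalue_eq_of_neg {D r : ℝ → ℝ} (hD : Differentiable ℝ D)
    (hDpos : ∀ x, 0 < D x) (hDper : Function.Periodic D 1) {q lam k k' : ℝ} {ψ ψt : ℝ → ℝ}
    (h1 : IsEigenpair q lam r D k ψ) (h2 : IsEigenpair q (-lam) r D k' ψt) :
    k = k' := by
  obtain ⟨hψ, hψ'⟩ := h1.differentiable
  obtain ⟨hψt, hψt'⟩ := h2.differentiable
  obtain ⟨hψC, hψpos, hψper, hψeq⟩ := h1
  obtain ⟨hψtC, hψtpos, hψtper, hψteq⟩ := h2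
  set w : ℝ → ℝ := fun x => ψ x * ψt x * D x ^ q
  have hw : Continuous w :=
    (hψC.continuous.mul hψtC.continuous).mul
      (hD.continuous.rpow_const fun x => Or.inl (hDpos x).ne')
  have hflux : ∀ x, HasDerivAt (lagrangeFlux q lam D ψ ψt) ((k - k') * w x) x := fun x => by
    convert hasDerivAt_lagrangeFlux (r := r) (hD x) (hDpos x) (hψ x) (hψ' x) (hψt x) (hψt' x)
      using 1
    rw [hψeq, hψteq]
    ring
  have hflux_per : Function.Periodic (lagrangeFlux q lam D ψ ψt) 1 := fun x => by
    simp only [lagrangeFlux, hDper x, hψper x, hψtper x, hψper.deriv x, hψtper.deriv x]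
  have hzero := hflux_per.intervalIntegral_deriv_eq_zero hflux (continuous_const.mul hw)
  have hw_int_pos : 0 < ∫ x in (0 : ℝ)..1, w x :=
    intervalIntegral.intervalIntegral_pos_of_pos (hw.intervalIntegrable 0 1)
      (fun x => mul_pos (mul_pos (hψpos x) (hψtpos x)) (rpow_pos_of_pos (hDpos x) q)) one_pos
  rw [intervalIntegral.integral_const_mul, mul_eq_zero, sub_eq_zero] at hzero
  exact hzero.resolve_right hw_int_pos.ne'

theorem stmt_12_general (D r : ℝ → ℝ) (hD : ContDiff ℝ 2 D) (hDpos : ∀ x, 0 < D x)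
    (hDper : Function.Periodic D 1)
    (q lam k k' : ℝ) (ψ ψt : ℝ → ℝ)
    (h1 : IsEigenpair q lam r D k ψ) (h2 : IsEigenpair q (-lam) r D k' ψt)
    (kk : ℝ → ℝ) (Ψ : ℝ → ℝ → ℝ)
    (hkk : ∀ l : ℝ, IsEigenpair q l r D (kk l) (Ψ l)) :
    k = k' ∧ speed kk = speed (fun l => kk (-l)) := by
  have hD' : Differentiable ℝ D := hD.differentiable two_ne_zero
  refine ⟨h1.eigenvalue_eq_of_neg hD' hDpos hDper h2, congrArg speed (funext fun l => ?_)⟩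
  exact (hkk l).eigenvalue_eq_of_neg hD' hDpos hDper (hkk (-l))

/-- Proposition `left_right`. `k_q^{−λ}[r;D] = k_q^λ[r;D]`, and
consequently the rightward and leftward spreading speeds coincide. -/
theorem stmt_12 (D r : ℝ → ℝ) (hD : ContDiff ℝ 2 D) (hDpos : ∀ x, 0 < D x)
    (hDper : Function.Periodic D 1) (hr : Continuous r) (hrper : Function.Periodic r 1)
    (q lam k k' : ℝ) (ψ ψt : ℝ → ℝ)
    (h1 : IsEigenpair q lam r D k ψ) (h2 : IsEigenpair q (-lam) r D k' ψt)
    (kk : ℝ → ℝ) (Ψ : ℝ → ℝ → ℝ)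
    (hkk : ∀ l : ℝ, IsEigenpair q l r D (kk l) (Ψ l)) :
    k = k' ∧ speed kk = speed (fun l => kk (-l)) :=
  stmt_12_general D r hD hDpos hDper q lam k k' ψ ψt h1 h2 kk Ψ hkk
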